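/- Let T be a bounded linear operator on a complex Hilbert space H, let |T| be the positive square root of T*T, and suppose that for some real α with 0 < α < 1 one has R(T) = R(|T|) = R(|T|^α), where |T|^α is defined by the continuous functional calculus. Then T is EP: R(T) is closed and R(T) = R(T*). -/

import Mathlib

/-!
Douglas' lemma turns `R(|T|^α) ⊆ R(|T|)` into `‖|T|^α x‖ ≤ C ‖|T| x‖`, that is
`|T|^{2α} ≤ C² |T|²`, so every point `t` of the spectrum of `|T|` satisfies `t^α ≤ C t`. As `α < 1`,
this keeps the nonzero spectrum away from `0`, and then `S = f(|T|)`, with `f(t) = 1/t` away from `0`,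
is a generalized inverse: `|T| S |T| = |T|`, so `R(|T|)` is the fixed-point set of `|T| S` and is closed.
Finally `R(T*) ⊆ (ker T)ᗮ = (ker |T|)ᗮ = R(|T|) = R(|T|²) = R(T*T) ⊆ R(T*)`.
-/

open Set ContinuousLinearMap
open scoped InnerProduct InnerProductSpace

theorem isClosed_range_of_comp_comp_eq_self {X Y : Type*} [TopologicalSpace X]
    [TopologicalSpace Y] [T2Space Y] {f : X → Y} {g : Y → X} (hf : Continuous f)
    (hg : Continuous g) (h : f ∘ g ∘ f = f) : IsClosed (range f) := by
  have : range f = {y | f (g y) = y} := by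
    ext y
    refine ⟨?_, fun hy ↦ ⟨g y, hy⟩⟩
    rintro ⟨x, rfl⟩
    exact congrFun h x
  rw [this]
  exact isClosed_eq (hf.comp hg) continuous_id

theorem Real.eq_zero_or_le_of_rpow_le_mul {t α C : ℝ} (ht : 0 ≤ t) (hα : α < 1)
    (h : t ^ α ≤ C * t) : t = 0 ∨ C⁻¹ ^ (1 - α)⁻¹ ≤ t := by
  rcases ht.eq_or_lt with rfl | ht
  · exact Or.inl rfl
  right
  have htα : 0 < t ^ α := Real.rpow_pos_of_pos ht α
  have hsplit : t = t ^ α * t ^ (1 - α) := by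
    rw [← Real.rpow_add ht, add_sub_cancel, Real.rpow_one]
  have hC : 0 < C := by
    by_contra! hC
    nlinarith
  have : C⁻¹ ≤ t ^ (1 - α) := by
    rw [inv_le_iff_one_le_mul₀ hC, mul_comm, ← le_mul_iff_one_le_right htα]
    calc t ^ α ≤ C * t := h
      _ = t ^ α * (C * t ^ (1 - α)) := by rw [mul_left_comm, ← hsplit]
  exact (Real.rpow_inv_le_iff_of_pos (inv_nonneg.2 hC.le) ht.le (by linarith)).2 this

theorem IsSelfAdjoint.exists_mul_mul_eq_self_of_spectrum_gap {A : Type*} [TopologicalSpace A]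
    [Ring A] [StarRing A] [Algebra ℝ A] [ContinuousFunctionalCalculus ℝ A IsSelfAdjoint]
    {a : A} (ha : IsSelfAdjoint a) {ε : ℝ} (hε : 0 < ε)
    (hgap : ∀ t ∈ spectrum ℝ a, t = 0 ∨ ε ≤ |t|) : ∃ b, a * b * a = a := by
  obtain ⟨f, hf, hff⟩ : ∃ f : ℝ → ℝ, Continuous f ∧ ∀ t, ε ≤ |t| → t * f t * t = t := by
    refine ⟨fun t ↦ t / max |t| ε ^ 2, continuous_id.div (by fun_prop)
      fun t ↦ (pow_pos (lt_max_of_lt_right hε) 2).ne', fun t ht ↦ ?_⟩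
    have : t ≠ 0 := abs_pos.1 (hε.trans_le ht)
    simp only [max_eq_left ht, sq_abs]
    field_simp
  refine ⟨cfc f a, ?_⟩
  calc a * cfc f a * a = cfc (fun t ↦ t * f t * t) a := by
        rw [cfc_mul .., cfc_mul .., cfc_id' ℝ a]
    _ = cfc (fun t ↦ t) a := cfc_congr fun t ht ↦ by
      rcases hgap t ht with rfl | hle
      · simp
      · exact hff t hle
    _ = a := cfc_id' ℝ a

theorem spectrum_gap_of_cfc_rpow_mul_self_le {A : Type*} [CStarAlgebra A] [PartialOrder A]
    [StarOrderedRing A] {a : A} (ha : 0 ≤ a) {α C : ℝ} (hα0 : 0 ≤ α) (hα1 : α < 1) (hC : 0 ≤ C)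
    (h : cfc (fun t : ℝ ↦ t ^ α) a * cfc (fun t : ℝ ↦ t ^ α) a ≤ C ^ 2 • (a * a)) :
    ∀ t ∈ spectrum ℝ a, t = 0 ∨ C⁻¹ ^ (1 - α)⁻¹ ≤ t := by
  have : Continuous fun t : ℝ ↦ t ^ α := Real.continuous_rpow_const hα0
  rw [← cfc_mul .., ← cfc_id' ℝ a, ← cfc_mul .., ← cfc_smul .., cfc_id' ℝ a,
    cfc_le_iff ..] at h
  intro t ht
  have ht0 : 0 ≤ t := spectrum_nonneg_of_nonneg ha ht
  refine Real.eq_zero_or_le_of_rpow_le_mul ht0 hα1 ?_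
  refine (mul_self_le_mul_self_iff (Real.rpow_nonneg ht0 α) (by positivity)).2 ?_
  exact (h t ht).trans_eq (by rw [smul_eq_mul]; ring)

theorem ContinuousLinearMap.exists_bounded_lift_of_range_le {𝕜 : Type*}
    [NontriviallyNormedField 𝕜] {E F G : Type*}
    [NormedAddCommGroup E] [NormedSpace 𝕜 E] [CompleteSpace E]
    [NormedAddCommGroup F] [NormedSpace 𝕜 F] [CompleteSpace F]
    [NormedAddCommGroup G] [NormedSpace 𝕜 G] {A : F →L[𝕜] G} {B : E →L[𝕜] G}
    (h : B.range ≤ A.range) : ∃ C > 0, ∀ x, ∃ y, A y = B x ∧ ‖y‖ ≤ C * ‖x‖ := by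
  let K := (B.coprod (-A)).ker
  have : CompleteSpace K := (B.coprod (-A)).isClosed_ker.completeSpace_coe
  let π : K →L[𝕜] E := (ContinuousLinearMap.fst 𝕜 E F).comp K.subtypeL
  have hπ : Function.Surjective π := by
    intro x
    obtain ⟨y, hy⟩ := h ⟨x, rfl⟩
    refine ⟨⟨(x, y), ?_⟩, rfl⟩
    simp [K, hy]
  obtain ⟨C, hC, hπC⟩ := π.exists_preimage_norm_le hπ
  refine ⟨C, hC, fun x ↦ ?_⟩
  obtain ⟨⟨⟨x', y⟩, hxy⟩, rfl, hle⟩ := hπC x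
  refine ⟨y, ?_, (_root_.norm_snd_le (x', y)).trans hle⟩
  have hxy : B x' + -A y = 0 := by
    simpa only [K, LinearMap.mem_ker, coe_coe, coprod_apply, neg_apply] using hxy
  exact (add_neg_eq_zero.1 hxy).symm

section Hilbert

variable {𝕜 : Type*} [RCLike 𝕜] {E F G : Type*}
  [NormedAddCommGroup E] [InnerProductSpace 𝕜 E] [CompleteSpace E]
  [NormedAddCommGroup F] [InnerProductSpace 𝕜 F] [CompleteSpace F]
  [NormedAddCommGroup G] [InnerProductSpace 𝕜 G] [CompleteSpace G]

theorem ContinuousLinearMap.exists_norm_adjoint_apply_le_of_range_le {A : F →L[𝕜] G}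
    {B : E →L[𝕜] G} (h : B.range ≤ A.range) : ∃ C > 0, ∀ z, ‖(B†) z‖ ≤ C * ‖(A†) z‖ := by
  obtain ⟨C, hC, hlift⟩ := exists_bounded_lift_of_range_le h
  refine ⟨C, hC, fun z ↦ ?_⟩
  obtain ⟨y, hy, hyle⟩ := hlift ((B†) z)
  have key : ‖(B†) z‖ ^ 2 ≤ C * ‖(A†) z‖ * ‖(B†) z‖ :=
    calc ‖(B†) z‖ ^ 2 = RCLike.re ⟪(B†) z, (B†) z⟫_𝕜 := norm_sq_eq_re_inner _
      _ = RCLike.re ⟪(A†) z, y⟫_𝕜 := by rw [adjoint_inner_left, adjoint_inner_left, hy]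
      _ ≤ ‖(A†) z‖ * ‖y‖ := re_inner_le_norm _ _
      _ ≤ ‖(A†) z‖ * (C * ‖(B†) z‖) := by gcongr
      _ = C * ‖(A†) z‖ * ‖(B†) z‖ := by ring
  nlinarith [norm_nonneg ((B†) z), mul_nonneg hC.le (norm_nonneg ((A†) z))]

theorem IsSelfAdjoint.range_comp_self_of_isClosed_range {R : E →L[𝕜] E} (hR : IsSelfAdjoint R)
    (hclosed : IsClosed (R.range : Set E)) : (R ∘L R).range = R.range := by
  refine le_antisymm (LinearMap.range_comp_le_range _ _) ?_
  rintro _ ⟨x, rfl⟩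
  have : CompleteSpace R.range := hclosed.completeSpace_coe
  obtain ⟨r, ⟨z, rfl⟩, k, hk, rfl⟩ := R.range.exists_add_mem_mem_orthogonal x
  rw [orthogonal_range, hR.adjoint_eq] at hk
  exact ⟨z, by simp [show R k = 0 from hk]⟩

theorem IsSelfAdjoint.range_adjoint_eq_of_comp_self_eq {T : E →L[𝕜] F} {R : E →L[𝕜] E}
    (hR : IsSelfAdjoint R) (hRT : R ∘L R = T† ∘L T) (hclosed : IsClosed (R.range : Set E)) :
    T†.range = R.range := by
  refine le_antisymm ?_ ?_
  · have hker : R.ker ≤ T.ker := by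
      rw [← ker_adjoint_comp_self T, ← hRT]
      exact LinearMap.ker_le_ker_comp _ _
    calc T†.range ≤ T†.range.topologicalClosure := Submodule.le_topologicalClosure _
      _ = T.kerᗮ := (orthogonal_ker T).symm
      _ ≤ R.kerᗮ := Submodule.orthogonal_le hker
      _ = R.range := by
        rw [orthogonal_ker, hR.adjoint_eq, hclosed.submodule_topologicalClosure_eq]
  · calc R.range = (R ∘L R).range := (hR.range_comp_self_of_isClosed_range hclosed).symm
      _ = (T† ∘L T).range := by rw [hRT]
      _ ≤ T†.range := LinearMap.range_comp_le_range _ _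

end Hilbert

theorem ContinuousLinearMap.adjoint_comp_self_le_of_norm_le {E F : Type*}
    [NormedAddCommGroup E] [InnerProductSpace ℂ E] [CompleteSpace E]
    [NormedAddCommGroup F] [InnerProductSpace ℂ F] [CompleteSpace F] {A B : E →L[ℂ] F} {C : ℝ}
    (h : ∀ x, ‖B x‖ ≤ C * ‖A x‖) : B† ∘L B ≤ C ^ 2 • (A† ∘L A) := by
  rw [le_def, isPositive_def', ← Complex.coe_smul]
  refine ⟨(((isPositive_adjoint_comp_self A).smul_of_nonneg
    (Complex.zero_le_real.2 (sq_nonneg C))).isSelfAdjoint).sub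
      (isPositive_adjoint_comp_self B).isSelfAdjoint, fun x ↦ ?_⟩
  have hsq : ‖B x‖ ^ 2 ≤ C ^ 2 * ‖A x‖ ^ 2 := by
    simpa only [mul_pow] using pow_le_pow_left₀ (norm_nonneg _) (h x) 2
  simp only [reApplyInnerSelf_apply, sub_apply, smul_apply, comp_apply, inner_sub_left,
    inner_smul_left, adjoint_inner_left, map_sub, inner_self_eq_norm_sq_to_K]
  simpa [← Complex.ofReal_pow] using hsq

variable {H : Type*} [NormedAddCommGroup H] [InnerProductSpace ℂ H] [CompleteSpace H]

/-- Let `T` be a bounded operator on a complex Hilbert space `H`, let `R = |T|` be the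
positive square root of `T*T`, and suppose that for some real `α` with `0 < α < 1` one has
`R(T) = R(|T|) = R(|T|^α)`, where `|T|^α = cfc (t ↦ t^α) |T|` is given by the continuous
functional calculus.  Then `T` is EP: `R(T)` is closed and `R(T) = R(T*)`. -/
theorem stmt11 (T R : H →L[ℂ] H) (α : ℝ) (hα0 : 0 < α) (hα1 : α < 1)
    (hRpos : R.IsPositive)
    (hRsq : R ∘L R = ContinuousLinearMap.adjoint T ∘L T)
    (h1 : LinearMap.range (T : H →ₗ[ℂ] H) = LinearMap.range (R : H →ₗ[ℂ] H))
    (h2 : LinearMap.range (R : H →ₗ[ℂ] H) = LinearMap.range ((cfc (fun t : ℝ => t ^ α) R : H →L[ℂ] H) : H →ₗ[ℂ] H)) :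
    IsClosed ((LinearMap.range (T : H →ₗ[ℂ] H) : Submodule ℂ H) : Set H) ∧
      LinearMap.range (T : H →ₗ[ℂ] H) = LinearMap.range ((ContinuousLinearMap.adjoint T : H →L[ℂ] H) : H →ₗ[ℂ] H) := by
  have hR : IsSelfAdjoint R := hRpos.isSelfAdjoint
  have hB : IsSelfAdjoint (cfc (fun t : ℝ => t ^ α) R) := cfc_predicate _ R
  obtain ⟨C, hC, hnorm⟩ := exists_norm_adjoint_apply_le_of_range_le h2.ge
  rw [hR.adjoint_eq, hB.adjoint_eq] at hnorm
  have hle := adjoint_comp_self_le_of_norm_le hnorm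
  rw [hR.adjoint_eq, hB.adjoint_eq] at hle
  have hgap := spectrum_gap_of_cfc_rpow_mul_self_le ((nonneg_iff_isPositive R).2 hRpos)
    hα0.le hα1 hC.le hle
  obtain ⟨S, hS⟩ := hR.exists_mul_mul_eq_self_of_spectrum_gap (by positivity)
    fun t ht ↦ (hgap t ht).imp_right (·.trans (le_abs_self t))
  have hclosed : IsClosed (R.range : Set H) := by
    rw [LinearMap.coe_range]
    exact isClosed_range_of_comp_comp_eq_self R.continuous S.continuous (congrArg DFunLike.coe hS)
  exact ⟨h1 ▸ hclosed, h1.trans (hR.range_adjoint_eq_of_comp_self_eq hRsq hclosed).symm⟩
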